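/- Under the boundary-case, variance, and integrability assumptions, almost surely liminf_{n→∞} R_n / log n ≥ 1/2 on the survival event {#𝐓 = ∞}. (This follows from the bound R_n / log n ≥ M_{τ_n} / log τ_n, where τ_n = inf{k ≥ n : M_k = R_n}, combined with the Hu–Shi result liminf_{n→∞} M_n / log n = 1/2 a.s. on survival.) -/

import Mathlib

open MeasureTheory ProbabilityTheory Filter Topology
open scoped ENNReal NNReal

/-!
A branching random walk on `ℝ`, encoded on Ulam–Harris labels (`List ℕ`):
`T ω` is the genealogical tree, `V ω u` the position of individual `u`,
`u.length` its generation. The structure bundles the boundary case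
assumptions, the variance assumption, the integrability assumption, the
non-lattice assumption, and the branching property (conditionally on the
σ-algebra `F n` of the first `n` generations, the processes generated
by the individuals of generation `n`, shifted to their birth positions,
are i.i.d. copies of the whole branching random walk).
-/
structure BRW where
  /-- the underlying sample space -/
  (Ω : Type)
  [m0 : MeasurableSpace Ω]
  (μ : Measure Ω)
  isProb : IsProbabilityMeasure μ
  /-- the genealogical tree, as a random set of Ulam–Harris labels -/
  T : Ω → Set (List ℕ)
  /-- the positions of the individuals -/
  V : Ω → List ℕ → ℝ
  root_mem : ∀ ω, [] ∈ T ω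
  root_pos : ∀ ω, V ω ([]) = 0
  tree_prefix_closed : ∀ ω, ∀ u v : List ℕ, u <+: v → v ∈ T ω → u ∈ T ω
  meas_T : ∀ u : List ℕ, MeasurableSet {ω | u ∈ T ω}
  meas_V : ∀ u : List ℕ, Measurable fun ω => V ω u
  /-- the natural filtration `F n = σ(u, V(u), |u| ≤ n)` -/
  F : MeasureTheory.Filtration ℕ m0
  F_meas_T : ∀ (n : ℕ) (u : List ℕ), u.length ≤ n → MeasurableSet[F n] {ω | u ∈ T ω}
  F_meas_V : ∀ (n : ℕ) (u : List ℕ), u.length ≤ n → Measurable[F n] fun ω => V ω u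
  /-- supercriticality: `E[∑_{|u|=1} 1] > 1` -/
  supercritical :
    1 < ∫⁻ ω, (∑' i : ℕ, Set.indicator {ω' | [i] ∈ T ω'} (fun _ => (1 : ℝ≥0∞)) ω) ∂μ
  /-- boundary case: `E[∑_{|u|=1} e^{-V(u)}] = 1` -/
  mean_one :
    ∫⁻ ω, (∑' i : ℕ, Set.indicator {ω' | [i] ∈ T ω'}
      (fun ω' => ENNReal.ofReal (Real.exp (-(V ω' ([i]))))) ω) ∂μ = 1
  int_VexpV : Integrable (fun ω => ∑' i : ℕ, Set.indicator {ω' | [i] ∈ T ω'}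
      (fun ω' => V ω' ([i]) * Real.exp (-(V ω' ([i])))) ω) μ
  /-- boundary case: `E[∑_{|u|=1} V(u) e^{-V(u)}] = 0` -/
  mean_zero :
    ∫ ω, (∑' i : ℕ, Set.indicator {ω' | [i] ∈ T ω'}
      (fun ω' => V ω' ([i]) * Real.exp (-(V ω' ([i])))) ω) ∂μ = 0
  /-- `σ² = E[∑_{|u|=1} V(u)² e^{-V(u)}]`, finite by the equality with `ENNReal.ofReal` -/
  σ2 : ℝ
  variance_eq :
    ENNReal.ofReal σ2 = ∫⁻ ω, (∑' i : ℕ, Set.indicator {ω' | [i] ∈ T ω'}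
      (fun ω' => ENNReal.ofReal ((V ω' ([i])) ^ 2 * Real.exp (-(V ω' ([i]))))) ω) ∂μ
  variance_pos : 0 < σ2
  /-- `E[∑_{|u|=1} e^{-V(u)} (log₊ ∑_{|u|=1} (1+V(u)₊) e^{-V(u)})²] < ∞` -/
  integrability :
    ∫⁻ ω, ENNReal.ofReal
      ((∑' i : ℕ, Set.indicator {ω' | [i] ∈ T ω'}
          (fun ω' => Real.exp (-(V ω' ([i])))) ω) *
        (max (Real.log (∑' i : ℕ, Set.indicator {ω' | [i] ∈ T ω'}
          (fun ω' => (1 + max (V ω' ([i])) 0) * Real.exp (-(V ω' ([i])))) ω)) 0) ^ 2) ∂μ < ⊤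
  /-- the displacement law is non-lattice -/
  nonlattice : ∀ a d : ℝ, 0 < d →
    ¬ (∀ᵐ ω ∂μ, ∀ i : ℕ, [i] ∈ T ω → ∃ k : ℤ, V ω ([i]) = a + k * d)
  /-- branching property: given `F n`, the shifted subtrees rooted at the individuals of
  generation `n` are i.i.d. copies of the whole branching random walk. A subtree rooted at `u`
  is encoded by the pair (membership predicate of the shifted tree, shifted positions). -/
  branching : ∀ (n : ℕ) (us : Finset (List ℕ)), (∀ u ∈ us, u.length = n) →
    ∀ A : Set Ω, MeasurableSet[F n] A → (∀ ω ∈ A, ∀ u ∈ us, u ∈ T ω) →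
    ∀ g : List ℕ → Set ((List ℕ → Prop) × (List ℕ → ℝ)),
      (∀ u ∈ us, MeasurableSet (g u)) →
      μ (A ∩ ⋂ u ∈ us, {ω | ((fun v => u ++ v ∈ T ω), fun v => V ω (u ++ v) - V ω u) ∈ g u})
        = μ A * ∏ u ∈ us, μ {ω | ((fun v => v ∈ T ω), V ω) ∈ g u}

attribute [instance] BRW.m0

namespace BRW

variable (B : BRW)

/-- `M n`, the minimal position at generation `n`. -/
noncomputable def M (n : ℕ) (ω : B.Ω) : ℝ :=
  sInf {x | ∃ u ∈ B.T ω, u.length = n ∧ B.V ω u = x}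

/-- `R n`, the minimal position attained after time `n`. -/
noncomputable def R (n : ℕ) (ω : B.Ω) : ℝ :=
  sInf {x | ∃ u ∈ B.T ω, n ≤ u.length ∧ B.V ω u = x}

/-- the additive martingale `W n = ∑_{|u|=n} e^{-V(u)}`. -/
noncomputable def W (n : ℕ) (ω : B.Ω) : ℝ :=
  ∑' u : List ℕ, Set.indicator {u : List ℕ | u.length = n ∧ u ∈ B.T ω}
    (fun u => Real.exp (-(B.V ω u))) u

/-- the derivative martingale `Z n = ∑_{|u|=n} V(u) e^{-V(u)}`. -/
noncomputable def Z (n : ℕ) (ω : B.Ω) : ℝ :=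
  ∑' u : List ℕ, Set.indicator {u : List ℕ | u.length = n ∧ u ∈ B.T ω}
    (fun u => B.V ω u * Real.exp (-(B.V ω u))) u

/-- `Zinf` is the a.s. limit `Z_∞` of the derivative martingale. -/
def IsDerivativeMartingaleLimit (Zinf : B.Ω → ℝ) : Prop :=
  Measurable Zinf ∧ ∀ᵐ ω ∂B.μ, Tendsto (fun n => B.Z n ω) atTop (𝓝 (Zinf ω))

/-- `c_M` is the constant from Madaule's tail estimate `lim_{x→∞} e^x P(R_0 ≤ -x) = c_M`. -/
def IsMadauleConstant (cM : ℝ) : Prop :=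
  0 < cM ∧
    Tendsto (fun x : ℝ => Real.exp x * (B.μ {ω | B.R 0 ω ≤ -x}).toReal) atTop (𝓝 cM)

end BRW

/-- convergence in law (in distribution) of `E`-valued random variables, stated by testing
against bounded continuous functions. -/
def ConvInLaw {Ω Ω' E : Type*} [MeasurableSpace Ω] [MeasurableSpace Ω'] [TopologicalSpace E]
    (μ : Measure Ω) (μ' : Measure Ω') (X : ℕ → Ω → E) (Y : Ω' → E) : Prop :=
  ∀ f : BoundedContinuousFunction E ℝ,
    Tendsto (fun n => ∫ ω, f (X n ω) ∂μ) atTop (𝓝 (∫ ω, f (Y ω) ∂μ'))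

/-- `c_*` is the constant from Aïdékon's theorem: `(Z_n, M_n - (3/2) log n)` converges in law
to a pair `(Z', W')` where `Z'` has the law of `Z_∞` and
`P(W' ≥ x | Z') = exp (-c_* Z' e^x)`. -/
def BRW.IsAidekonConstant (B : BRW) (Zinf : B.Ω → ℝ) (cstar : ℝ) : Prop :=
  ∃ (Ω' : Type) (m' : MeasurableSpace Ω') (μ' : @Measure Ω' m') (Z' W' : Ω' → ℝ),
    @IsProbabilityMeasure Ω' m' μ' ∧ @Measurable Ω' ℝ m' _ Z' ∧ @Measurable Ω' ℝ m' _ W' ∧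
    @Measure.map Ω' ℝ m' _ Z' μ' = Measure.map Zinf B.μ ∧
    (∀ x : ℝ,
      (@MeasureTheory.condExp Ω' ℝ (MeasurableSpace.comap Z' Real.measurableSpace) m' _ _ μ'
          (Set.indicator {ω' | x ≤ W' ω'} (fun _ => (1 : ℝ))))
        =ᵐ[μ'] fun ω' => Real.exp (-(cstar * Z' ω' * Real.exp x))) ∧
    @ConvInLaw B.Ω Ω' (ℝ × ℝ) _ m' _ B.μ μ'
      (fun n ω => (B.Z n ω, B.M n ω - (3 / 2) * Real.log n)) (fun ω' => (Z' ω', W' ω'))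

/-- a random vector `(Z', W', L')` on some probability space, used to describe limits in law. -/
structure RandomTriple where
  (Ω' : Type)
  [m' : MeasurableSpace Ω']
  (μ' : Measure Ω')
  isProb : IsProbabilityMeasure μ'
  (Z' : Ω' → ℝ)
  (W' : Ω' → ℝ)
  (L' : Ω' → ℝ)
  meas_Z : Measurable Z'
  meas_W : Measurable W'
  meas_L : Measurable L'

attribute [instance] RandomTriple.m'

/-- a real random variable on some probability space, used to describe limits in law. -/
structure RandomVar where
  (Ω' : Type)
  [m' : MeasurableSpace Ω']
  (μ' : Measure Ω')
  isProb : IsProbabilityMeasure μ'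
  (X' : Ω' → ℝ)
  meas_X : Measurable X'

attribute [instance] RandomVar.m'

/-! Every position reached at a generation `k ≥ n` is at least `M_k ≥ a log k ≥ a log n`, so an
eventual lower bound `M_k ≥ a log k` with `a > 0` passes to `R_n ≥ a log n`; as `R_n ≤ M_n`, the
ratio `R_n / log n` is squeezed between `a` and `M_n / log n`, and letting `a ↑ liminf M_n / log n`
gives the claim. -/

theorem nonempty_and_bddBelow_of_sInf_pos {s : Set ℝ} (h : 0 < sInf s) :
    s.Nonempty ∧ BddBelow s := by
  refine ⟨Set.nonempty_iff_ne_empty.2 fun hs => ?_, by_contra fun hs => ?_⟩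
  · simp [hs] at h
  · simp [Real.sInf_of_not_bddBelow hs] at h

/-- `0 < liminf f l` rules out the junk value `0` that `liminf` takes on sequences of `ℝ` that
are not cobounded from below. -/
theorem le_liminf_of_forall_pos_eventually_le {ι : Type*} {l : Filter ι} [l.NeBot]
    {f g : ι → ℝ} (hf : 0 < liminf f l)
    (h : ∀ a, 0 < a → a < liminf f l → ∀ᶠ i in l, a ≤ g i ∧ g i ≤ f i) :
    liminf f l ≤ liminf g l := by
  have hbelow (y : ℝ) (hy : y < liminf f l) : ∀ᶠ i in l, y ≤ g i := by
    have ha : liminf f l / 2 < liminf f l := half_lt_self hf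
    filter_upwards [h (max y (liminf f l / 2)) (by positivity) (max_lt hy ha)] with i hi
    exact (le_max_left _ _).trans hi.1
  have hf_cobdd : l.IsCoboundedUnder (· ≥ ·) f := by
    by_contra hc
    simp [Real.liminf_of_not_isCoboundedUnder hc] at hf
  obtain ⟨b, hb⟩ := hf_cobdd.frequently_le
  have hg_cobdd : l.IsCoboundedUnder (· ≥ ·) g :=
    IsCoboundedUnder.of_frequently_le (a := b) <|
      (hb.and_eventually (h _ (half_pos hf) (half_lt_self hf))).mono
        fun i hi => hi.2.2.trans hi.1
  have hg_bdd : l.IsBoundedUnder (· ≥ ·) g := ⟨_, hbelow _ (sub_one_lt _)⟩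
  exact (le_liminf_iff' hg_cobdd hg_bdd).2 hbelow

namespace BRW

variable {B : BRW} {ω : B.Ω} {n : ℕ} {c : ℝ}

theorem M_le_V {k : ℕ} {u : List ℕ} (hM : 0 < B.M k ω) (hu : u ∈ B.T ω) (hk : u.length = k) :
    B.M k ω ≤ B.V ω u :=
  csInf_le (nonempty_and_bddBelow_of_sInf_pos hM).2 ⟨u, hu, hk, rfl⟩

theorem le_V_of_forall_le_M (hc : 0 < c) (hM : ∀ k, n ≤ k → c ≤ B.M k ω) {u : List ℕ}
    (hu : u ∈ B.T ω) (hn : n ≤ u.length) : c ≤ B.V ω u :=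
  (hM _ hn).trans (M_le_V (hc.trans_le (hM _ hn)) hu rfl)

theorem nonempty_of_forall_le_M (hc : 0 < c) (hM : ∀ k, n ≤ k → c ≤ B.M k ω) :
    {x | ∃ u ∈ B.T ω, u.length = n ∧ B.V ω u = x}.Nonempty :=
  (nonempty_and_bddBelow_of_sInf_pos (hc.trans_le (hM n le_rfl))).1

theorem le_R_of_forall_le_M (hc : 0 < c) (hM : ∀ k, n ≤ k → c ≤ B.M k ω) : c ≤ B.R n ω := by
  obtain ⟨x, u, hu, hn, rfl⟩ := nonempty_of_forall_le_M hc hM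
  refine le_csInf ⟨_, u, hu, hn.ge, rfl⟩ ?_
  rintro _ ⟨v, hv, hnv, rfl⟩
  exact le_V_of_forall_le_M hc hM hv hnv

theorem R_le_M_of_forall_le_M (hc : 0 < c) (hM : ∀ k, n ≤ k → c ≤ B.M k ω) :
    B.R n ω ≤ B.M n ω := by
  refine csInf_le_csInf ⟨c, ?_⟩ (nonempty_of_forall_le_M hc hM) ?_
  · rintro _ ⟨v, hv, hnv, rfl⟩
    exact le_V_of_forall_le_M hc hM hv hnv
  · rintro _ ⟨v, hv, hnv, rfl⟩
    exact ⟨v, hv, hnv.ge, rfl⟩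

theorem eventually_le_R_div_log_le_M_div_log {a : ℝ} (ha : 0 < a)
    (haM : a < liminf (fun n : ℕ => B.M n ω / Real.log n) atTop) :
    ∀ᶠ n : ℕ in atTop,
      a ≤ B.R n ω / Real.log n ∧ B.R n ω / Real.log n ≤ B.M n ω / Real.log n := by
  have hM_bdd : atTop.IsBoundedUnder (· ≥ ·) fun n : ℕ => B.M n ω / Real.log n := by
    by_contra hb
    rw [Real.liminf_of_not_isBoundedUnder hb] at haM
    exact ha.not_gt haM
  have hM : ∀ᶠ n : ℕ in atTop, ∀ k, n ≤ k → a * Real.log k ≤ B.M k ω := by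
    refine eventually_forall_ge_atTop.2 ?_
    filter_upwards [eventually_lt_of_lt_liminf haM hM_bdd, eventually_ge_atTop 2] with k hk hk2
    have hlog : 0 < Real.log k := Real.log_pos (by exact_mod_cast hk2)
    exact ((lt_div_iff₀ hlog).1 hk).le
  filter_upwards [hM, eventually_ge_atTop 2] with n hn hn2
  have hlog : 0 < Real.log n := Real.log_pos (by exact_mod_cast hn2)
  have hc : 0 < a * Real.log n := mul_pos ha hlog
  have hcM (k : ℕ) (hk : n ≤ k) : a * Real.log n ≤ B.M k ω :=
    le_trans (by gcongr) (hn k hk)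
  exact ⟨(le_div_iff₀ hlog).2 (le_R_of_forall_le_M hc hcM),
    div_le_div_of_nonneg_right (R_le_M_of_forall_le_M hc hcM) hlog.le⟩

end BRW

/-- almost surely on the survival event, `liminf R_n / log n ≥ 1/2`; it follows from the
bound `R_n / log n ≥ M_{τ_n} / log τ_n` and the Hu–Shi result
`liminf M_n / log n = 1/2` a.s. on survival. -/
theorem liminf_Rn_over_log (B : BRW)
    (hHuShi : ∀ᵐ ω ∂B.μ, (B.T ω).Infinite →
      liminf (fun n : ℕ => B.M n ω / Real.log n) atTop = 1 / 2) :
    ∀ᵐ ω ∂B.μ, (B.T ω).Infinite →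
      (1 / 2 : ℝ) ≤ liminf (fun n : ℕ => B.R n ω / Real.log n) atTop := by
  filter_upwards [hHuShi] with ω hω hsurvival
  rw [← hω hsurvival]
  exact le_liminf_of_forall_pos_eventually_le (by rw [hω hsurvival]; norm_num)
    fun a ha haM => BRW.eventually_le_R_div_log_le_M_div_log ha haM
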